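/- For q ≥ 3 and d ≥ 0, the number of d-dimensional faces of 𝕃²_q equals binomial(q(q-1)/2, d+1) + q * binomial(q-1, d). -/

import Mathlib

/-- The big facet `F₀` of `𝕃²_q`: all non-diagonal unordered pairs `{i,j}`, `i < j`. -/
def L2F0 (q : ℕ) : Finset (Sym2 (Fin q)) :=
  Finset.univ.filter (fun e => ¬ e.IsDiag)

/-- The facet `F_k` of `𝕃²_q`: all pairs `{k, j}` with `j ∈ {1,...,q}`. -/
def L2F (q : ℕ) (k : Fin q) : Finset (Sym2 (Fin q)) :=
  Finset.univ.image (fun j : Fin q => s(k, j))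

/-- Faces of `𝕃²_q`: subsets of `F₀` or of some `F_k`. -/
def L2IsFace (q : ℕ) (σ : Finset (Sym2 (Fin q))) : Prop :=
  σ ⊆ L2F0 q ∨ ∃ k : Fin q, σ ⊆ L2F q k

/-- Facets of `𝕃²_q`: maximal faces. -/
def L2IsFacet (q : ℕ) (σ : Finset (Sym2 (Fin q))) : Prop :=
  L2IsFace q σ ∧ ∀ τ : Finset (Sym2 (Fin q)), L2IsFace q τ → σ ⊆ τ → σ = τ

instance (q : ℕ) : DecidablePred (L2IsFace q) := fun σ => by
  unfold L2IsFace; infer_instance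

instance (q : ℕ) : DecidablePred (L2IsFacet q) := fun σ => by
  unfold L2IsFacet; infer_instance

/-!
A face containing a diagonal vertex `{i,i}` cannot lie in `F₀`, and lies in `F_k` only for
`k = i`; a face in `F_k` avoiding `{k,k}` already lies in `F₀`. So the `d`-faces split disjointly
into the `(d+1)`-subsets of `F₀`, of which there are `binomial(q(q-1)/2, d+1)`, and, for each
`i`, the `(d+1)`-subsets of `F_i` through `{i,i}`, of which there are `binomial(q-1, d)`.
-/

open Finset

section L2

variable {q : ℕ}

lemma mem_L2F0 {e : Sym2 (Fin q)} : e ∈ L2F0 q ↔ ¬ e.IsDiag := by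
  simp [L2F0]

lemma mem_L2F {k : Fin q} {e : Sym2 (Fin q)} : e ∈ L2F q k ↔ ∃ j, s(k, j) = e := by
  simp [L2F]

lemma diag_mem_L2F_iff {i k : Fin q} : s(i, i) ∈ L2F q k ↔ i = k := by
  refine ⟨fun h => ?_, fun h => mem_L2F.2 ⟨i, h ▸ rfl⟩⟩
  obtain ⟨j, hj⟩ := mem_L2F.1 h
  rcases Sym2.eq_iff.1 hj with ⟨h, -⟩ | ⟨h, -⟩ <;> exact h.symm

lemma diag_notMem_L2F0 (i : Fin q) : s(i, i) ∉ L2F0 q :=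
  fun h => mem_L2F0.1 h (Sym2.mk_isDiag_iff.2 rfl)

lemma card_L2F0 : #(L2F0 q) = q * (q - 1) / 2 := by
  have h := Sym2.card_subtype_not_diag (α := Fin q)
  rw [Fintype.card_subtype] at h
  simpa [L2F0, Nat.choose_two_right] using h

lemma card_L2F (k : Fin q) : #(L2F q k) = q := by
  rw [L2F, card_image_of_injective _ fun _ _ => Sym2.congr_right.1, card_univ, Fintype.card_fin]

lemma L2IsFace_iff {σ : Finset (Sym2 (Fin q))} :
    L2IsFace q σ ↔ σ ⊆ L2F0 q ∨ ∃ i, s(i, i) ∈ σ ∧ σ ⊆ L2F q i := by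
  refine ⟨?_, ?_⟩
  · rintro (h | ⟨k, hk⟩)
    · exact Or.inl h
    by_cases hkk : s(k, k) ∈ σ
    · exact Or.inr ⟨k, hkk, hk⟩
    refine Or.inl fun e he => ?_
    obtain ⟨j, rfl⟩ := mem_L2F.1 (hk he)
    rw [mem_L2F0, Sym2.mk_isDiag_iff]
    rintro rfl
    exact hkk he
  · rintro (h | ⟨i, -, hi⟩)
    exacts [Or.inl h, Or.inr ⟨i, hi⟩]

lemma filter_L2IsFace_and_card_eq (d : ℕ) :
    univ.filter (fun σ : Finset (Sym2 (Fin q)) => L2IsFace q σ ∧ #σ = d + 1) =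
      (L2F0 q).powersetCard (d + 1) ∪
        univ.biUnion fun i => {σ ∈ (L2F q i).powersetCard (d + 1) | {s(i, i)} ⊆ σ} := by
  ext σ : 1
  simp only [L2IsFace_iff, mem_filter, mem_univ, true_and, mem_union, mem_powersetCard,
    mem_biUnion, singleton_subset_iff]
  grind

lemma disjoint_powersetCard_L2F0_biUnion (d : ℕ) :
    Disjoint ((L2F0 q).powersetCard (d + 1))
      (univ.biUnion fun i => {σ ∈ (L2F q i).powersetCard (d + 1) | {s(i, i)} ⊆ σ}) := by
  simp only [disjoint_left, mem_powersetCard, mem_biUnion, mem_filter, singleton_subset_iff]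
  rintro σ ⟨hσ, -⟩ ⟨i, -, -, hi⟩
  exact diag_notMem_L2F0 i (hσ hi)

lemma pairwise_disjoint_filter_diag_mem (d : ℕ) :
    ((univ : Finset (Fin q)) : Set (Fin q)).PairwiseDisjoint
      fun i => {σ ∈ (L2F q i).powersetCard (d + 1) | {s(i, i)} ⊆ σ} := by
  simp only [Set.PairwiseDisjoint, Set.Pairwise, Function.onFun, disjoint_left, mem_filter,
    mem_powersetCard, singleton_subset_iff]
  rintro i - j - hij σ ⟨⟨hσi, -⟩, -⟩ ⟨-, hj⟩
  exact hij (diag_mem_L2F_iff.1 (hσi hj)).symm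

end L2

theorem L2_card_faces_general (q : ℕ) (d : ℕ) :
    (Finset.univ.filter
        (fun σ : Finset (Sym2 (Fin q)) => L2IsFace q σ ∧ σ.card = d + 1)).card =
      Nat.choose (q * (q - 1) / 2) (d + 1) + q * Nat.choose (q - 1) d := by
  rw [filter_L2IsFace_and_card_eq, card_union_of_disjoint (disjoint_powersetCard_L2F0_biUnion d),
    card_powersetCard, card_L2F0, card_biUnion (pairwise_disjoint_filter_diag_mem d)]
  have hdiag (i : Fin q) : {s(i, i)} ⊆ L2F q i := singleton_subset_iff.2 (diag_mem_L2F_iff.2 rfl)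
  have hcard (i : Fin q) := card_filter_powersetCard_subset _ _ (d + 1) (hdiag i)
    (by rw [card_singleton]; lia)
  simp only [hcard, card_L2F, card_singleton, add_tsub_cancel_right, sum_const, card_univ,
    Fintype.card_fin, smul_eq_mul]

/-- For `q ≥ 3` and `d ≥ 0`, the number of `d`-dimensional faces of `𝕃²_q` equals
`binomial(q(q-1)/2, d+1) + q * binomial(q-1, d)`. -/
theorem L2_card_faces (q : ℕ) (hq : 3 ≤ q) (d : ℕ) :
    (Finset.univ.filter
        (fun σ : Finset (Sym2 (Fin q)) => L2IsFace q σ ∧ σ.card = d + 1)).card =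
      Nat.choose (q * (q - 1) / 2) (d + 1) + q * Nat.choose (q - 1) d :=
  L2_card_faces_general q d
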